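/- Let R be a Noetherian integral domain. A proper ideal P of R is a prime ideal if and only if P is a P²-prime ideal. -/

import Mathlib

/-!
If `P` is `I`-prime but not prime, pick `a, b ∉ P` with `a * b ∈ P`. Every perturbation
`(a + p) * (b + q)` with `p, q ∈ P` is again a product of non-members lying in `P`, hence lies
in `I * P`, and `p * q` is an alternating sum of four of them; so `P * P ≤ I * P`. For
`I = P ^ 2` this says `P ^ 2 ≤ P * P ^ 2`, and Nakayama's lemma in a Noetherian domain forces
`P ^ 2 = ⊥`, i.e. `P = ⊥`, which is prime after all.
-/

/-- A proper ideal `P` of a commutative ring `R` is `I`-prime if whenever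
`a * b ∈ P \ I*P`, then `a ∈ P` or `b ∈ P`. -/
def IsIPrime {R : Type*} [CommRing R] (I P : Ideal R) : Prop :=
  P ≠ ⊤ ∧ ∀ a b : R, a * b ∈ P → a * b ∉ I * P → a ∈ P ∨ b ∈ P

/-- A proper ideal `Q` is weakly prime if whenever `a * b ∈ Q \ {0}`,
then `a ∈ Q` or `b ∈ Q`. -/
def IsWeaklyPrime {R : Type*} [CommRing R] (Q : Ideal R) : Prop :=
  Q ≠ ⊤ ∧ ∀ a b : R, a * b ∈ Q → a * b ≠ 0 → a ∈ Q ∨ b ∈ Q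

theorem Ideal.IsPrime.isIPrime {R : Type*} [CommRing R] {P : Ideal R} (hP : P.IsPrime)
    (I : Ideal R) : IsIPrime I P :=
  ⟨hP.ne_top, fun _ _ hab _ => hP.mem_or_mem hab⟩

namespace IsIPrime

variable {R : Type*} [CommRing R] {I P : Ideal R}

theorem mul_mem_of_notMem (h : IsIPrime I P) {x y : R} (hxy : x * y ∈ P) (hx : x ∉ P)
    (hy : y ∉ P) : x * y ∈ I * P := by
  by_contra hxy'
  exact (h.2 x y hxy hxy').elim hx hy

theorem mul_le_of_not_isPrime (h : IsIPrime I P) (hP : ¬P.IsPrime) : P * P ≤ I * P := by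
  obtain ⟨a, b, hab, ha, hb⟩ : ∃ a b, a * b ∈ P ∧ a ∉ P ∧ b ∉ P := by
    simpa [Ideal.isPrime_iff, h.1] using hP
  have add_notMem {x p : R} (hx : x ∉ P) (hp : p ∈ P) : x + p ∉ P :=
    fun hxp => hx (by simpa using P.sub_mem hxp hp)
  have perturb_mem {p q : R} (hp : p ∈ P) (hq : q ∈ P) : (a + p) * (b + q) ∈ I * P := by
    refine h.mul_mem_of_notMem ?_ (add_notMem ha hp) (add_notMem hb hq)
    rw [show (a + p) * (b + q) = a * b + (a * q + p * (b + q)) by ring]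
    exact P.add_mem hab (P.add_mem (P.mul_mem_left _ hq) (P.mul_mem_right _ hp))
  refine Ideal.mul_le.mpr fun p hp q hq => ?_
  have h00 := perturb_mem P.zero_mem P.zero_mem
  have hp0 := perturb_mem hp P.zero_mem
  have h0q := perturb_mem P.zero_mem hq
  have hpq := perturb_mem hp hq
  rw [show p * q = (a + p) * (b + q) - (a + p) * (b + 0) - (a + 0) * (b + q) + (a + 0) * (b + 0)
    by ring]
  exact add_mem (sub_mem (sub_mem hpq hp0) h0q) h00

end IsIPrime

theorem Ideal.eq_bot_of_le_mul_of_fg {R : Type*} [CommRing R] [IsDomain R] {I J : Ideal R}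
    (hI : I ≠ ⊤) (hJ : J.FG) (h : J ≤ I * J) : J = ⊥ := by
  obtain ⟨r, hr, hrJ⟩ := Submodule.exists_sub_one_mem_and_smul_eq_zero_of_fg_of_le_smul I J hJ h
  have hr0 : r ≠ 0 := by
    rintro rfl
    exact hI (I.eq_top_iff_one.mpr (by simpa using I.neg_mem hr))
  exact eq_bot_iff.mpr fun x hx => (mul_eq_zero.mp (hrJ x hx)).resolve_left hr0

theorem stmt_9_general {R : Type*} [CommRing R] [IsDomain R] [IsNoetherianRing R]
    (P : Ideal R) :
    P.IsPrime ↔ IsIPrime (P ^ 2) P := by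
  refine ⟨fun hP => hP.isIPrime _, fun h => ?_⟩
  by_contra hP
  have hsq : P ^ 2 ≤ P * P ^ 2 :=
    calc P ^ 2 = P * P := sq P
      _ ≤ P ^ 2 * P := h.mul_le_of_not_isPrime hP
      _ = P * P ^ 2 := mul_comm _ _
  have hbot : P = ⊥ := (Ideal.pow_eq_bot two_ne_zero).mp
    (Ideal.eq_bot_of_le_mul_of_fg h.1 (IsNoetherian.noetherian _) hsq)
  exact hP (hbot ▸ Ideal.isPrime_bot)

theorem stmt_9 {R : Type*} [CommRing R] [IsDomain R] [IsNoetherianRing R]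
    (P : Ideal R) (hP : P ≠ ⊤) :
    P.IsPrime ↔ IsIPrime (P ^ 2) P :=
  stmt_9_general P
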